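/- For a finite gain graph Φ with finite gain group 𝔊, and nonnegative integers k, z with q = k|𝔊| + z, the number of proper colorations κ : V → (𝔊 × [k]) ∪ [z] equals ∑_{S ⊆ E} (−1)^{|S|} q^{b(S)} z^{c(S)−b(S)}. A coloration is proper if for no edge e_{ij}: κ(v_i) = κ(v_j) ∈ [z], and for no edge e_{ij}: κ(v_i) = (m,g) and κ(v_j) = (m, g·φ(e_{ij})). -/

import Mathlib

/-!
Inclusion–exclusion over the set `S` of edges at which a coloration is improper reduces the
count to colorations that are improper on every edge of `S`. Let `𝔊` act on the right of the
colours by `(g, m) • h = (g * h, m)` and trivially on `[z]`; then such a coloration `κ` satisfies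
`κ (tgt e) = κ (src e) • φ e` for `e ∈ S`. On each component of `(V, S)` it is therefore
determined by its value at one vertex, and that value must be fixed by the gain of every closed
walk there. In a balanced component every closed walk has trivial gain (cut it at a repeated
vertex or at a doubled edge until circles remain), so all `q` colours are allowed; in an
unbalanced one some closed walk has nontrivial gain, and only the `z` colours of `[z]` are fixed
by it.
-/

/-- A finite gain graph with gain group `𝔊`: each edge is given with a chosen orientation
`src e → tgt e` and its gain in that orientation (its gain in the reverse orientation
being the inverse). -/
structure GG (𝔊 : Type) [Group 𝔊] : Type 1 where
  V : Type
  E : Type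
  fV : Fintype V
  fE : Fintype E
  src : E → V
  tgt : E → V
  gain : E → 𝔊

attribute [instance] GG.fV GG.fE

variable {𝔊 : Type} [Group 𝔊]

/-- Switching a gain graph by a switching function `η`. -/
def GG.switch (Φ : GG 𝔊) (η : Φ.V → 𝔊) : GG 𝔊 :=
  { Φ with gain := fun e => (η (Φ.src e))⁻¹ * Φ.gain e * η (Φ.tgt e) }

open Classical in
/-- Contract the edges of `S` (identifying the endpoints of each edge of `S`) and delete
the edges of `D`, keeping the gains of the remaining edges.  `Φ.contractDel ∅ D` is
deletion of `D`, and `Φ.contractDel {e} {e}` is contraction `Φ/e` of a neutral edge `e`. -/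
noncomputable def GG.contractDel (Φ : GG 𝔊) (S D : Finset Φ.E) : GG 𝔊 where
  V := Quot (fun x y : Φ.V => ∃ e ∈ S, x = Φ.src e ∧ y = Φ.tgt e)
  E := {e' : Φ.E // e' ∉ D}
  fV := @Fintype.ofSurjective _ _ (Classical.decEq _) _ (Quot.mk _)
      (fun q => Quot.exists_rep q)
  fE := inferInstance
  src := fun e' => Quot.mk _ (Φ.src e'.1)
  tgt := fun e' => Quot.mk _ (Φ.tgt e'.1)
  gain := fun e' => Φ.gain e'.1

/-- The source of a directed edge (an edge together with a direction of traversal). -/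
def GG.dsrc (Φ : GG 𝔊) (p : Φ.E × Bool) : Φ.V := if p.2 then Φ.src p.1 else Φ.tgt p.1

/-- The target of a directed edge. -/
def GG.dtgt (Φ : GG 𝔊) (p : Φ.E × Bool) : Φ.V := if p.2 then Φ.tgt p.1 else Φ.src p.1

/-- The gain of a directed edge. -/
def GG.dgain (Φ : GG 𝔊) (p : Φ.E × Bool) : 𝔊 := if p.2 then Φ.gain p.1 else (Φ.gain p.1)⁻¹

/-- `w` is a circle of the edge set `S`: a nonempty closed walk using edges of `S`, with
no repeated edges and no repeated vertices. -/
structure GG.IsCircle (Φ : GG 𝔊) (S : Finset Φ.E) (w : List (Φ.E × Bool)) : Prop where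
  ne : w ≠ []
  mem : ∀ p ∈ w, p.1 ∈ S
  chain : w.Chain' fun p q => Φ.dtgt p = Φ.dsrc q
  closed : ∀ h : w ≠ [], Φ.dtgt (w.getLast h) = Φ.dsrc (w.head h)
  edgesNodup : (w.map Prod.fst).Nodup
  vertsNodup : (w.map Φ.dsrc).Nodup

/-- The simple graph on the vertices of `Φ` whose adjacency is given by the edges in `S`. -/
def GG.compGraph (Φ : GG 𝔊) (S : Finset Φ.E) : SimpleGraph Φ.V :=
  SimpleGraph.fromRel fun a b => ∃ e ∈ S, Φ.src e = a ∧ Φ.tgt e = b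

/-- `c(S)`: the number of connected components of the spanning subgraph `(V, S)`. -/
noncomputable def GG.c (Φ : GG 𝔊) (S : Finset Φ.E) : ℕ :=
  Nat.card (Φ.compGraph S).ConnectedComponent

/-- A component of `(V, S)` is balanced if every circle of `S` lying in it has gain equal
to the identity. -/
def GG.BalancedComp (Φ : GG 𝔊) (S : Finset Φ.E) (C : (Φ.compGraph S).ConnectedComponent) :
    Prop :=
  ∀ w, Φ.IsCircle S w → ∀ h : w ≠ [],
    (Φ.compGraph S).connectedComponentMk (Φ.dsrc (w.head h)) = C →
      (w.map Φ.dgain).prod = 1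

/-- `b(S)`: the number of balanced components of `(V, S)`. -/
noncomputable def GG.b (Φ : GG 𝔊) (S : Finset Φ.E) : ℕ :=
  Nat.card {C : (Φ.compGraph S).ConnectedComponent // Φ.BalancedComp S C}

open scoped RightActions

namespace List

theorem exists_split_of_not_nodup_map {α β : Type*} (f : α → β) :
    ∀ l : List α, ¬ (l.map f).Nodup →
      ∃ l₁ p l₂ q l₃, l = l₁ ++ p :: (l₂ ++ q :: l₃) ∧ f p = f q
  | [], h => absurd List.nodup_nil h
  | a :: t, h => by
    by_cases ha : f a ∈ t.map f
    · obtain ⟨q, hq, hfq⟩ := List.mem_map.mp ha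
      obtain ⟨l₂, l₃, rfl⟩ := List.mem_iff_append.mp hq
      exact ⟨[], a, l₂, q, l₃, rfl, hfq.symm⟩
    · have ht : ¬ (t.map f).Nodup := fun hn => h (by simp [ha, hn])
      obtain ⟨l₁, p, l₂, q, l₃, rfl, hpq⟩ := exists_split_of_not_nodup_map f t ht
      exact ⟨a :: l₁, p, l₂, q, l₃, rfl, hpq⟩

end List

open Finset in
theorem natCard_forall_not_eq_sum {α β : Type*} [Finite α] [Fintype β] (P : α → β → Prop) :
    (Nat.card {a // ∀ b, ¬ P a b} : ℤ) =
      ∑ S : Finset β, (-1) ^ #S * (Nat.card {a // ∀ b ∈ S, P a b} : ℤ) := by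
  classical
  have := Fintype.ofFinite α
  have hinf (S : Finset β) :
      #(S.inf fun b => ({a | P a b} : Finset α)) = Nat.card {a // ∀ b ∈ S, P a b} := by
    rw [Nat.card_eq_fintype_card, Fintype.card_subtype]
    congr 1; ext; simp [mem_inf]
  have hcompl :
      #(univ.inf fun b => ({a | P a b} : Finset α)ᶜ) = Nat.card {a // ∀ b, ¬ P a b} := by
    rw [Nat.card_eq_fintype_card, Fintype.card_subtype]
    congr 1; ext; simp [mem_inf]
  rw [← hcompl, inclusion_exclusion_card_inf_compl, powerset_univ]
  simp only [hinf]

namespace GG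

section Walks

variable {Φ : GG 𝔊} {S : Finset Φ.E} {u v : Φ.V} {p q : Φ.E × Bool}
  {w w₁ w₂ : List (Φ.E × Bool)}

def IsWalk (Φ : GG 𝔊) (S : Finset Φ.E) : Φ.V → Φ.V → List (Φ.E × Bool) → Prop
  | u, v, [] => u = v
  | u, v, p :: w => p.1 ∈ S ∧ Φ.dsrc p = u ∧ Φ.IsWalk S (Φ.dtgt p) v w

def walkGain (Φ : GG 𝔊) (w : List (Φ.E × Bool)) : 𝔊 := (w.map Φ.dgain).prod

def reverseWalk (w : List (Φ.E × Bool)) : List (Φ.E × Bool) :=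
  w.reverse.map fun p => (p.1, !p.2)

@[simp] theorem isWalk_nil : Φ.IsWalk S u v [] ↔ u = v := Iff.rfl

@[simp] theorem isWalk_cons :
    Φ.IsWalk S u v (p :: w) ↔ p.1 ∈ S ∧ Φ.dsrc p = u ∧ Φ.IsWalk S (Φ.dtgt p) v w := Iff.rfl

theorem isWalk_append :
    Φ.IsWalk S u v (w₁ ++ w₂) ↔ ∃ x, Φ.IsWalk S u x w₁ ∧ Φ.IsWalk S x v w₂ := by
  induction w₁ generalizing u with
  | nil => simp
  | cons p t ih =>
    simp only [List.cons_append, isWalk_cons, ih]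
    exact ⟨fun ⟨hp, hu, x, h₁, h₂⟩ => ⟨x, ⟨hp, hu, h₁⟩, h₂⟩,
      fun ⟨x, ⟨hp, hu, h₁⟩, h₂⟩ => ⟨hp, hu, x, h₁, h₂⟩⟩

@[simp] theorem dsrc_flip (p : Φ.E × Bool) : Φ.dsrc (p.1, !p.2) = Φ.dtgt p := by
  obtain ⟨e, _ | _⟩ := p <;> rfl

@[simp] theorem dtgt_flip (p : Φ.E × Bool) : Φ.dtgt (p.1, !p.2) = Φ.dsrc p := by
  obtain ⟨e, _ | _⟩ := p <;> rfl

@[simp] theorem dgain_flip (p : Φ.E × Bool) : Φ.dgain (p.1, !p.2) = (Φ.dgain p)⁻¹ := by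
  obtain ⟨e, _ | _⟩ := p <;> simp [GG.dgain]

theorem eq_flip_of_fst_eq (h : p.1 = q.1) (hne : Φ.dsrc p ≠ Φ.dsrc q) : q = (p.1, !p.2) := by
  obtain ⟨e, b⟩ := p
  obtain ⟨e', b'⟩ := q
  cases b <;> cases b' <;> simp_all

theorem IsWalk.reverse (hw : Φ.IsWalk S u v w) : Φ.IsWalk S v u (reverseWalk w) := by
  induction w generalizing u with
  | nil => exact hw.symm
  | cons p t ih =>
    obtain ⟨hp, rfl, ht⟩ := hw
    have hflip : Φ.IsWalk S (Φ.dtgt p) (Φ.dsrc p) [(p.1, !p.2)] := by simp [hp]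
    simpa [reverseWalk] using isWalk_append.2 ⟨_, ih ht, hflip⟩

@[simp] theorem walkGain_nil : Φ.walkGain [] = 1 := rfl

@[simp] theorem walkGain_cons : Φ.walkGain (p :: w) = Φ.dgain p * Φ.walkGain w := by
  simp [walkGain]

@[simp] theorem walkGain_append : Φ.walkGain (w₁ ++ w₂) = Φ.walkGain w₁ * Φ.walkGain w₂ := by
  simp [walkGain]

@[simp] theorem walkGain_reverseWalk : Φ.walkGain (reverseWalk w) = (Φ.walkGain w)⁻¹ := by
  induction w with
  | nil => simp [reverseWalk]
  | cons p t ih => simp_all [reverseWalk]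

theorem connectedComponentMk_src_eq_tgt {e : Φ.E} (he : e ∈ S) :
    (Φ.compGraph S).connectedComponentMk (Φ.src e) =
      (Φ.compGraph S).connectedComponentMk (Φ.tgt e) := by
  rcases eq_or_ne (Φ.src e) (Φ.tgt e) with h | h
  · rw [h]
  · exact SimpleGraph.ConnectedComponent.sound
      (SimpleGraph.Adj.reachable ⟨h, Or.inl ⟨e, he, rfl, rfl⟩⟩)

theorem connectedComponentMk_dsrc_eq_dtgt (hp : p.1 ∈ S) :
    (Φ.compGraph S).connectedComponentMk (Φ.dsrc p) =
      (Φ.compGraph S).connectedComponentMk (Φ.dtgt p) := by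
  obtain ⟨e, _ | _⟩ := p
  · exact (connectedComponentMk_src_eq_tgt hp).symm
  · exact connectedComponentMk_src_eq_tgt hp

theorem IsWalk.connectedComponentMk_eq (hw : Φ.IsWalk S u v w) :
    (Φ.compGraph S).connectedComponentMk u = (Φ.compGraph S).connectedComponentMk v := by
  induction w generalizing u with
  | nil => rw [hw]
  | cons p t ih =>
    obtain ⟨hp, rfl, ht⟩ := hw
    exact (connectedComponentMk_dsrc_eq_dtgt hp).trans (ih ht)

theorem exists_isWalk_of_reachable (h : (Φ.compGraph S).Reachable u v) :
    ∃ w, Φ.IsWalk S u v w := by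
  obtain ⟨p⟩ := h
  induction p with
  | nil => exact ⟨[], rfl⟩
  | cons hadj _ ih =>
    obtain ⟨w, hw⟩ := ih
    rcases hadj.2 with ⟨e, he, rfl, rfl⟩ | ⟨e, he, rfl, rfl⟩
    · exact ⟨(e, true) :: w, he, rfl, hw⟩
    · exact ⟨(e, false) :: w, he, rfl, hw⟩

theorem exists_isWalk_out {C : (Φ.compGraph S).ConnectedComponent}
    (hv : (Φ.compGraph S).connectedComponentMk v = C) : ∃ w, Φ.IsWalk S C.out v w :=
  exists_isWalk_of_reachable (SimpleGraph.ConnectedComponent.exact (C.out_eq.trans hv.symm))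

theorem isWalk_iff_of_ne_nil (hw : w ≠ []) :
    Φ.IsWalk S u v w ↔ (∀ p ∈ w, p.1 ∈ S) ∧ w.IsChain (fun p q => Φ.dtgt p = Φ.dsrc q) ∧
      Φ.dsrc (w.head hw) = u ∧ Φ.dtgt (w.getLast hw) = v := by
  induction w generalizing u with
  | nil => exact absurd rfl hw
  | cons p t ih =>
    cases t with
    | nil => simp [and_comm, eq_comm]
    | cons r s =>
      rw [isWalk_cons, ih (List.cons_ne_nil r s)]
      simp only [List.mem_cons, forall_eq_or_imp, List.isChain_cons_cons, List.head_cons,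
        List.getLast_cons_cons]
      constructor
      · rintro ⟨hp, hu, ⟨hr, hs⟩, hch, hdr, hv⟩
        exact ⟨⟨hp, hr, hs⟩, ⟨hdr.symm, hch⟩, hu, hv⟩
      · rintro ⟨⟨hp, hr, hs⟩, ⟨hdr, hch⟩, hu, hv⟩
        exact ⟨hp, hu, ⟨hr, hs⟩, hch, hdr.symm, hv⟩

theorem IsCircle.isWalk (hw : Φ.IsCircle S w) :
    Φ.IsWalk S (Φ.dsrc (w.head hw.ne)) (Φ.dsrc (w.head hw.ne)) w :=
  (isWalk_iff_of_ne_nil hw.ne).2 ⟨hw.mem, hw.chain, rfl, hw.closed hw.ne⟩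

theorem isCircle_of_isWalk (hw : Φ.IsWalk S u u w) (hne : w ≠ [])
    (hE : (w.map Prod.fst).Nodup) (hV : (w.map Φ.dsrc).Nodup) : Φ.IsCircle S w := by
  obtain ⟨hmem, hchain, hhead, hlast⟩ := (isWalk_iff_of_ne_nil hne).1 hw
  exact ⟨hne, hmem, hchain, fun h => hlast.trans hhead.symm, hE, hV⟩

end Walks

section Balance

variable {Φ : GG 𝔊} {S : Finset Φ.E} {C : (Φ.compGraph S).ConnectedComponent}

/-- Strong induction on the length: a closed walk that is not a circle has a repeated vertex,
where it splits into two shorter closed walks, or a doubled edge `e … e⁻¹` enclosing a shorter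
closed walk, whose removal leaves another one. -/
theorem BalancedComp.walkGain_eq_one (hC : Φ.BalancedComp S C) {u : Φ.V}
    {w : List (Φ.E × Bool)} (hu : (Φ.compGraph S).connectedComponentMk u = C)
    (hw : Φ.IsWalk S u u w) : Φ.walkGain w = 1 := by
  induction hn : w.length using Nat.strong_induction_on generalizing u w with
  | _ n ih =>
  subst hn
  rcases eq_or_ne w [] with rfl | hne
  · rfl
  by_cases hV : (w.map Φ.dsrc).Nodup
  · by_cases hE : (w.map Prod.fst).Nodup
    · have hhead : Φ.dsrc (w.head hne) = u := ((isWalk_iff_of_ne_nil hne).1 hw).2.2.1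
      exact hC w (isCircle_of_isWalk hw hne hE hV) hne (hhead ▸ hu)
    obtain ⟨l₁, p, l₂, q, l₃, rfl, hpq⟩ := List.exists_split_of_not_nodup_map _ w hE
    have hsrc : Φ.dsrc p ≠ Φ.dsrc q := by
      simp only [List.map_append, List.map_cons, List.nodup_append, List.nodup_cons,
        List.mem_append, List.mem_cons, List.mem_map] at hV
      exact fun h => hV.2.1.1 (Or.inr (Or.inl h))
    obtain rfl := eq_flip_of_fst_eq hpq hsrc
    simp only [isWalk_append, isWalk_cons, dsrc_flip, dtgt_flip] at hw
    obtain ⟨_, h₁, hp, rfl, _, h₂, -, rfl, h₃⟩ := hw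
    simp only [List.length_append, List.length_cons] at ih
    have hmid : Φ.walkGain l₂ = 1 :=
      ih _ (by omega) ((connectedComponentMk_dsrc_eq_dtgt hp).symm.trans
        (h₁.connectedComponentMk_eq.symm.trans hu)) h₂ rfl
    have hout : Φ.walkGain (l₁ ++ l₃) = 1 :=
      ih _ (by simp only [List.length_append]; omega) hu (isWalk_append.2 ⟨_, h₁, h₃⟩) rfl
    simp only [walkGain_append, walkGain_cons, dgain_flip, hmid] at hout ⊢
    simpa [mul_assoc] using hout
  · obtain ⟨l₁, p, l₂, q, l₃, rfl, hpq⟩ := List.exists_split_of_not_nodup_map _ w hV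
    simp only [isWalk_append, isWalk_cons] at hw
    obtain ⟨_, h₁, hp, rfl, _, h₂, hq, rfl, h₃⟩ := hw
    simp only [List.length_append, List.length_cons] at ih
    have hloop : Φ.walkGain (p :: l₂) = 1 :=
      ih _ (by simp only [List.length_cons]; omega) (h₁.connectedComponentMk_eq.symm.trans hu)
        (by simpa [hpq] using ⟨hp, h₂⟩) rfl
    have hout : Φ.walkGain (l₁ ++ q :: l₃) = 1 :=
      ih _ (by simp only [List.length_append, List.length_cons]; omega) hu
        (isWalk_append.2 ⟨_, hpq ▸ h₁, hq, rfl, h₃⟩) rfl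
    simp only [walkGain_append, walkGain_cons] at hloop hout ⊢
    rw [← mul_assoc (Φ.dgain p), hloop, one_mul, hout]

theorem exists_walkGain_ne_one_of_not_balancedComp (hC : ¬ Φ.BalancedComp S C) :
    ∃ w, Φ.IsWalk S C.out C.out w ∧ Φ.walkGain w ≠ 1 := by
  simp only [BalancedComp, not_forall] at hC
  obtain ⟨c, hc, hne, hcC, hgain⟩ := hC
  obtain ⟨w, hw⟩ := exists_isWalk_out hcC
  refine ⟨w ++ c ++ reverseWalk w, isWalk_append.2 ⟨_, isWalk_append.2 ⟨_, hw, hc.isWalk⟩,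
    hw.reverse⟩, ?_⟩
  rwa [walkGain_append, walkGain_append, walkGain_reverseWalk, Ne, conj_eq_one_iff]

end Balance

section Compatible

variable {X : Type*} [MulAction 𝔊ᵐᵒᵖ X] {Φ : GG 𝔊} {S : Finset Φ.E}
  {C : (Φ.compGraph S).ConnectedComponent} {κ : Φ.V → X} {x : X} {u v : Φ.V}
  {w w₁ w₂ : List (Φ.E × Bool)}

def IsCompatible (Φ : GG 𝔊) (S : Finset Φ.E) (κ : Φ.V → X) : Prop :=
  ∀ e ∈ S, κ (Φ.tgt e) = κ (Φ.src e) <• Φ.gain e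

theorem IsCompatible.apply_dtgt (hκ : Φ.IsCompatible S κ) {p : Φ.E × Bool} (hp : p.1 ∈ S) :
    κ (Φ.dtgt p) = κ (Φ.dsrc p) <• Φ.dgain p := by
  obtain ⟨e, _ | _⟩ := p
  · simp [GG.dtgt, GG.dsrc, GG.dgain, hκ e hp]
  · exact hκ e hp

theorem IsCompatible.apply_of_isWalk (hκ : Φ.IsCompatible S κ) (hw : Φ.IsWalk S u v w) :
    κ v = κ u <• Φ.walkGain w := by
  induction w generalizing u with
  | nil => simp [← isWalk_nil.1 hw]
  | cons p t ih =>
    obtain ⟨hp, rfl, ht⟩ := hw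
    rw [ih ht, hκ.apply_dtgt hp, op_smul_op_smul, walkGain_cons]

def IsHolonomyFixed (Φ : GG 𝔊) (S : Finset Φ.E) (C : (Φ.compGraph S).ConnectedComponent)
    (x : X) : Prop :=
  ∀ w, Φ.IsWalk S C.out C.out w → x <• Φ.walkGain w = x

theorem IsHolonomyFixed.op_smul_walkGain_eq (hx : Φ.IsHolonomyFixed S C x)
    (hw₁ : Φ.IsWalk S C.out v w₁) (hw₂ : Φ.IsWalk S C.out v w₂) :
    x <• Φ.walkGain w₁ = x <• Φ.walkGain w₂ := by
  have hloop := hx _ (isWalk_append.2 ⟨_, hw₁, hw₂.reverse⟩)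
  rw [walkGain_append, walkGain_reverseWalk] at hloop
  conv_rhs => rw [← hloop, op_smul_op_smul, inv_mul_cancel_right]

noncomputable def propagate (f : ∀ C, {x : X // Φ.IsHolonomyFixed S C x}) (v : Φ.V) : X :=
  (f ((Φ.compGraph S).connectedComponentMk v)).1 <•
    Φ.walkGain (exists_isWalk_out (C := (Φ.compGraph S).connectedComponentMk v) rfl).choose

theorem propagate_apply (f : ∀ C, {x : X // Φ.IsHolonomyFixed S C x})
    (hv : (Φ.compGraph S).connectedComponentMk v = C) (hw : Φ.IsWalk S C.out v w) :
    propagate f v = (f C).1 <• Φ.walkGain w := by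
  subst hv
  exact (f _).2.op_smul_walkGain_eq (exists_isWalk_out rfl).choose_spec hw

theorem isCompatible_propagate (f : ∀ C, {x : X // Φ.IsHolonomyFixed S C x}) :
    Φ.IsCompatible S (propagate f) := by
  intro e he
  obtain ⟨w, hw⟩ := exists_isWalk_out (rfl : (Φ.compGraph S).connectedComponentMk (Φ.src e) = _)
  have hwe : Φ.IsWalk S _ (Φ.tgt e) (w ++ [(e, true)]) :=
    isWalk_append.2 ⟨_, hw, by simpa [GG.dsrc, GG.dtgt] using he⟩
  rw [propagate_apply f rfl hw, propagate_apply f (connectedComponentMk_src_eq_tgt he).symm hwe,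
    walkGain_append, ← op_smul_op_smul]
  simp [GG.dgain]

noncomputable def compatibleEquiv :
    {κ : Φ.V → X // Φ.IsCompatible S κ} ≃ ∀ C, {x : X // Φ.IsHolonomyFixed S C x} where
  toFun κ C := ⟨κ.1 C.out, fun _ hw => (κ.2.apply_of_isWalk hw).symm⟩
  invFun f := ⟨propagate f, isCompatible_propagate f⟩
  left_inv κ := Subtype.ext <| funext fun v => by
    dsimp only
    obtain ⟨w, hw⟩ := exists_isWalk_out (rfl : (Φ.compGraph S).connectedComponentMk v = _)
    exact (propagate_apply _ rfl hw).trans (κ.2.apply_of_isWalk hw).symm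
  right_inv f := funext fun C => Subtype.ext <| by
    simpa using propagate_apply f C.out_eq (w := []) rfl

end Compatible

section Palette

variable {α β : Type*}

abbrev paletteAction (α β : Type*) : MulAction 𝔊ᵐᵒᵖ ((𝔊 × α) ⊕ β) where
  smul h := Sum.map (fun x => (x.1 * h.unop, x.2)) id
  one_smul := by rintro (_ | _) <;> simp [HSMul.hSMul]
  mul_smul := by rintro _ _ (_ | _) <;> simp [HSMul.hSMul, mul_assoc]

attribute [local instance] paletteAction

@[simp] theorem inl_op_smul (g h : 𝔊) (a : α) :
    (Sum.inl (g, a) : (𝔊 × α) ⊕ β) <• h = Sum.inl (g * h, a) := rfl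

@[simp] theorem inr_op_smul (b : β) (h : 𝔊) : (Sum.inr b : (𝔊 × α) ⊕ β) <• h = Sum.inr b := rfl

theorem palette_op_smul_eq_self_iff {x : (𝔊 × α) ⊕ β} {h : 𝔊} :
    x <• h = x ↔ h = 1 ∨ x.isRight := by
  rcases x with ⟨g, a⟩ | b <;> simp

theorem palette_proper_iff {c d : (𝔊 × α) ⊕ β} {h : 𝔊} :
    ((¬ ∃ m, c = Sum.inr m ∧ d = Sum.inr m) ∧
      ¬ ∃ g m, c = Sum.inl (g, m) ∧ d = Sum.inl (g * h, m)) ↔ d ≠ c <• h := by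
  rcases c with ⟨g, a⟩ | b <;> simp [eq_comm]

variable {Φ : GG 𝔊} {S : Finset Φ.E} {C : (Φ.compGraph S).ConnectedComponent}

theorem card_holonomyFixed_of_balancedComp [Finite 𝔊] [Finite α] [Finite β]
    (hC : Φ.BalancedComp S C) :
    Nat.card {x : (𝔊 × α) ⊕ β // Φ.IsHolonomyFixed S C x} =
      Nat.card 𝔊 * Nat.card α + Nat.card β := by
  have hfix (x : (𝔊 × α) ⊕ β) : Φ.IsHolonomyFixed S C x := fun _ hw => by
    rw [hC.walkGain_eq_one C.out_eq hw, MulOpposite.op_one, one_smul]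
  rw [Nat.card_congr (Equiv.subtypeUnivEquiv hfix), Nat.card_sum, Nat.card_prod]

theorem card_holonomyFixed_of_not_balancedComp (hC : ¬ Φ.BalancedComp S C) :
    Nat.card {x : (𝔊 × α) ⊕ β // Φ.IsHolonomyFixed S C x} = Nat.card β := by
  obtain ⟨w, hw, hne⟩ := exists_walkGain_ne_one_of_not_balancedComp hC
  have hfix (x : (𝔊 × α) ⊕ β) : Φ.IsHolonomyFixed S C x ↔ x.isRight :=
    ⟨fun hx => (palette_op_smul_eq_self_iff.1 (hx w hw)).resolve_left hne,
      fun hx _ _ => palette_op_smul_eq_self_iff.2 (Or.inr hx)⟩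
  exact Nat.card_congr ((Equiv.subtypeEquivRight hfix).trans Equiv.sumIsRight)

open Finset in
theorem card_isCompatible_palette [Finite 𝔊] [Finite α] [Finite β] (Φ : GG 𝔊)
    (S : Finset Φ.E) :
    Nat.card {κ : Φ.V → (𝔊 × α) ⊕ β // Φ.IsCompatible S κ} =
      (Nat.card 𝔊 * Nat.card α + Nat.card β) ^ Φ.b S * Nat.card β ^ (Φ.c S - Φ.b S) := by
  classical
  have hcard (C : (Φ.compGraph S).ConnectedComponent) :
      Nat.card {x : (𝔊 × α) ⊕ β // Φ.IsHolonomyFixed S C x} =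
        if Φ.BalancedComp S C then Nat.card 𝔊 * Nat.card α + Nat.card β else Nat.card β := by
    split_ifs with hC
    exacts [card_holonomyFixed_of_balancedComp hC, card_holonomyFixed_of_not_balancedComp hC]
  have hb : Φ.b S = #{C | Φ.BalancedComp S C} := by
    rw [GG.b, Nat.card_eq_fintype_card, Fintype.card_subtype]
  have hcb : Φ.c S - Φ.b S = #{C | ¬ Φ.BalancedComp S C} := by
    rw [GG.c, hb, Nat.card_eq_fintype_card, ← Finset.card_univ,
      ← Finset.card_filter_add_card_filter_not (Φ.BalancedComp S), Nat.add_sub_cancel_left]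
  rw [Nat.card_congr compatibleEquiv, Nat.card_pi, Finset.prod_congr rfl fun C _ => hcard C,
    Finset.prod_ite, Finset.prod_const, Finset.prod_const, hcb, hb]

end Palette

end GG

/-- For a gain graph with finite gain group `𝔊` and nonnegative integers `k, z`, with
`q = k|𝔊| + z`, the number of proper colorations `κ : V → (𝔊 × [k]) ∪ [z]` equals
`∑_{S ⊆ E} (−1)^{|S|} q^{b(S)} z^{c(S)−b(S)}`. -/
theorem stmt_8 [Fintype 𝔊] (Φ : GG 𝔊) (k z : ℕ) :
    (Nat.card {κ : Φ.V → (𝔊 × Fin k) ⊕ Fin z //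
        ∀ e : Φ.E,
          (¬ ∃ m : Fin z, κ (Φ.src e) = Sum.inr m ∧ κ (Φ.tgt e) = Sum.inr m) ∧
          (¬ ∃ (g : 𝔊) (m : Fin k),
            κ (Φ.src e) = Sum.inl (g, m) ∧ κ (Φ.tgt e) = Sum.inl (g * Φ.gain e, m))} : ℤ) =
      ∑ S : Finset Φ.E, (-1) ^ S.card *
        ((k * Fintype.card 𝔊 + z : ℕ) : ℤ) ^ Φ.b S * (z : ℤ) ^ (Φ.c S - Φ.b S) := by
  rw [Nat.card_congr (Equiv.subtypeEquivRight fun κ => forall_congr' fun e =>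
      GG.palette_proper_iff), natCard_forall_not_eq_sum]
  refine Finset.sum_congr rfl fun S _ => ?_
  have hcompatible := GG.card_isCompatible_palette (α := Fin k) (β := Fin z) Φ S
  simp only [GG.IsCompatible, Nat.card_eq_fintype_card, Fintype.card_fin] at hcompatible
  rw [hcompatible]
  push_cast
  ring
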